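/- Let m ∈ ℤ_{≥0} and 0 ≤ j ≤ 2m. The mock modular completion functions R^{[B]} satisfy R^{[B]}_{2m−j+1/2, m+1/2}(τ, v) = R^{[B]}_{j+1/2, m+1/2}(τ, −v) and R^{[B]}_{j+1/2, m+1/2}(τ+1, v) = e^{−πi(j+1/2)²/(2m+1)} R^{[B]}_{j+1/2, m+1/2}(τ, v). -/

import Mathlib

/-! Both identities hold termwise. Under `k ↦ -k - 1` the index `n = j + 1/2 + (2m+1)k` of
`R_{2m-j+1/2}` becomes `-n` of `R_{j+1/2}`; since `sgn` and `E` are odd and `(-1)^{(2m+1)k}` also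
changes sign, the summand is that of `R_{j+1/2}` at `-v`. For `τ ↦ τ + 1` one uses
`n² ≡ (j + 1/2)² mod 2(2m+1)`. -/

noncomputable section

open Complex

/-- Zwegers-type error function `E(x) = 2∫₀ˣ e^{−πu²} du`. -/
def Efun (x : ℝ) : ℝ := 2 * ∫ u in (0 : ℝ)..x, Real.exp (-Real.pi * u ^ 2)

/-- The Zwegers-type function `R^{[B]}_{j+1/2, m+1/2}(τ,v)`: the sum over half-integers
`n ≡ j + 1/2 mod (2m+1)`, parametrized by `n = j + 1/2 + (2m+1)k`, `k ∈ ℤ`. -/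
def RB (m : ℕ) (j : ℤ) (τ v : ℂ) : ℂ :=
  ∑' k : ℤ,
    (-1 : ℂ) ^ ((2 * (m : ℤ) + 1) * k) *
      (((Real.sign ((j : ℝ) + 1 / 2 + (2 * (m : ℝ) + 1) * (k : ℝ)) -
          Efun ((((j : ℝ) + 1 / 2 + (2 * (m : ℝ) + 1) * (k : ℝ)) +
              (2 * (m : ℝ) + 1) * (v.im / τ.im)) *
            Real.sqrt (τ.im / ((m : ℝ) + 1 / 2)))) : ℝ) : ℂ) *
      Complex.exp (-(Real.pi : ℂ) * I * ((j : ℂ) + 1 / 2 + (2 * (m : ℂ) + 1) * (k : ℂ)) ^ 2 * τ /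
          (2 * (m : ℂ) + 1) -
        2 * (Real.pi : ℂ) * I * ((j : ℂ) + 1 / 2 + (2 * (m : ℂ) + 1) * (k : ℂ)) * v)

def RBterm (m : ℕ) (j : ℤ) (τ v : ℂ) (k : ℤ) : ℂ :=
  (-1 : ℂ) ^ ((2 * (m : ℤ) + 1) * k) *
    (((Real.sign ((j : ℝ) + 1 / 2 + (2 * (m : ℝ) + 1) * (k : ℝ)) -
        Efun ((((j : ℝ) + 1 / 2 + (2 * (m : ℝ) + 1) * (k : ℝ)) +
            (2 * (m : ℝ) + 1) * (v.im / τ.im)) *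
          Real.sqrt (τ.im / ((m : ℝ) + 1 / 2)))) : ℝ) : ℂ) *
    Complex.exp (-(Real.pi : ℂ) * I * ((j : ℂ) + 1 / 2 + (2 * (m : ℂ) + 1) * (k : ℂ)) ^ 2 * τ /
        (2 * (m : ℂ) + 1) -
      2 * (Real.pi : ℂ) * I * ((j : ℂ) + 1 / 2 + (2 * (m : ℂ) + 1) * (k : ℂ)) * v)

theorem RB_eq_tsum_RBterm (m : ℕ) (j : ℤ) (τ v : ℂ) :
    RB m j τ v = ∑' k : ℤ, RBterm m j τ v k := rfl

theorem Efun_neg (x : ℝ) : Efun (-x) = -Efun x := by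
  have h := intervalIntegral.integral_comp_neg (a := x) (b := 0)
    (fun u => Real.exp (-Real.pi * u ^ 2))
  simp only [neg_zero, neg_sq] at h
  rw [Efun, Efun, ← h, intervalIntegral.integral_symm]
  ring

theorem neg_one_zpow_mul_neg_sub_one {α : Type*} [DivisionRing α] {M : ℤ} (hM : Odd M) (k : ℤ) :
    (-1 : α) ^ (M * (-k - 1)) = -(-1 : α) ^ (M * k) := by
  rw [show M * (-k - 1) = -(M * k) + -M by ring, zpow_add₀ (by norm_num), zpow_neg,
    zpow_neg, hM.neg_one_zpow]
  rcases Int.even_or_odd (M * k) with h | h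
  · rw [h.neg_one_zpow]; norm_num
  · rw [h.neg_one_zpow]; norm_num

/-- `(j + 1/2 + (2m+1)k)² ≡ (j + 1/2)² mod 2(2m+1)`, because `k(k+1)` is even. -/
theorem exp_sq_shift_div_odd (m : ℕ) (j k : ℤ) :
    Complex.exp (-(Real.pi : ℂ) * I * ((j : ℂ) + 1 / 2 + (2 * (m : ℂ) + 1) * (k : ℂ)) ^ 2 /
        (2 * (m : ℂ) + 1)) =
      Complex.exp (-(Real.pi : ℂ) * I * ((j : ℂ) + 1 / 2) ^ 2 / (2 * (m : ℂ) + 1)) := by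
  obtain ⟨s, hs⟩ : Even (k * (k + 1)) := Int.even_mul_succ_self k
  have hs' : (k : ℂ) * (k + 1) = s + s := by exact_mod_cast hs
  have hM : (2 * (m : ℂ) + 1) ≠ 0 := by exact_mod_cast (by omega : 2 * m + 1 ≠ 0)
  refine Complex.exp_eq_exp_iff_exists_int.mpr ⟨-(j * k + m * k ^ 2 + s), ?_⟩
  field_simp
  push_cast
  linear_combination (-4 * (2 * (m : ℂ) + 1)) * hs'

theorem RBterm_reflect (m : ℕ) (j : ℤ) (τ v : ℂ) (k : ℤ) :
    RBterm m (2 * m - j) τ v (-k - 1) = RBterm m j τ (-v) k := by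
  have hr : ((2 * (m : ℤ) - j : ℤ) : ℝ) + 1 / 2 + (2 * (m : ℝ) + 1) * ((-k - 1 : ℤ) : ℝ) =
      -((j : ℝ) + 1 / 2 + (2 * (m : ℝ) + 1) * (k : ℝ)) := by push_cast; ring
  have hc : ((2 * (m : ℤ) - j : ℤ) : ℂ) + 1 / 2 + (2 * (m : ℂ) + 1) * ((-k - 1 : ℤ) : ℂ) =
      -((j : ℂ) + 1 / 2 + (2 * (m : ℂ) + 1) * (k : ℂ)) := by push_cast; ring
  have hE : (-((j : ℝ) + 1 / 2 + (2 * (m : ℝ) + 1) * (k : ℝ)) +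
        (2 * (m : ℝ) + 1) * (v.im / τ.im)) * Real.sqrt (τ.im / ((m : ℝ) + 1 / 2)) =
      -((((j : ℝ) + 1 / 2 + (2 * (m : ℝ) + 1) * (k : ℝ)) +
        (2 * (m : ℝ) + 1) * ((-v).im / τ.im)) * Real.sqrt (τ.im / ((m : ℝ) + 1 / 2))) := by
    rw [Complex.neg_im]; ring
  rw [RBterm, RBterm, neg_one_zpow_mul_neg_sub_one ⟨m, by ring⟩, hr, hc, Real.sign_neg, hE,
    Efun_neg]
  push_cast
  ring_nf

theorem RBterm_add_one (m : ℕ) (j : ℤ) (τ v : ℂ) (k : ℤ) :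
    RBterm m j (τ + 1) v k =
      Complex.exp (-(Real.pi : ℂ) * I * ((j : ℂ) + 1 / 2) ^ 2 / (2 * (m : ℂ) + 1)) *
        RBterm m j τ v k := by
  rw [RBterm, RBterm, Complex.add_im, Complex.one_im, add_zero, ← exp_sq_shift_div_odd m j k]
  set n : ℂ := (j : ℂ) + 1 / 2 + (2 * (m : ℂ) + 1) * (k : ℂ)
  have hsplit : -(Real.pi : ℂ) * I * n ^ 2 * (τ + 1) / (2 * (m : ℂ) + 1) - 2 * Real.pi * I * n * v =
      -(Real.pi : ℂ) * I * n ^ 2 / (2 * (m : ℂ) + 1) +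
        (-(Real.pi : ℂ) * I * n ^ 2 * τ / (2 * (m : ℂ) + 1) - 2 * Real.pi * I * n * v) := by
    ring
  rw [hsplit, Complex.exp_add]
  ring

theorem stmt17_general (m : ℕ) (j : ℤ)
    (τ v : ℂ) :
    RB m (2 * (m : ℤ) - j) τ v = RB m j τ (-v) ∧
      RB m j (τ + 1) v =
        Complex.exp (-(Real.pi : ℂ) * I * ((j : ℂ) + 1 / 2) ^ 2 / (2 * (m : ℂ) + 1)) *
          RB m j τ v := by
  refine ⟨?_, ?_⟩
  · rw [RB_eq_tsum_RBterm, RB_eq_tsum_RBterm,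
      ← ((Equiv.neg ℤ).trans (Equiv.subRight 1)).tsum_eq]
    exact tsum_congr (RBterm_reflect m j τ v)
  · simp only [RB_eq_tsum_RBterm, RBterm_add_one, tsum_mul_left]

/-- For `0 ≤ j ≤ 2m`: `R^{[B]}_{2m−j+1/2, m+1/2}(τ, v) = R^{[B]}_{j+1/2, m+1/2}(τ, −v)` and
`R^{[B]}_{j+1/2, m+1/2}(τ+1, v) = e^{−πi(j+1/2)²/(2m+1)} R^{[B]}_{j+1/2, m+1/2}(τ, v)`. -/
theorem stmt17 (m : ℕ) (j : ℤ) (hj0 : 0 ≤ j) (hj1 : j ≤ 2 * (m : ℤ))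
    (τ v : ℂ) (hτ : 0 < τ.im) :
    RB m (2 * (m : ℤ) - j) τ v = RB m j τ (-v) ∧
      RB m j (τ + 1) v =
        Complex.exp (-(Real.pi : ℂ) * I * ((j : ℂ) + 1 / 2) ^ 2 / (2 * (m : ℂ) + 1)) *
          RB m j τ v :=
  stmt17_general m j τ v
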